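/- Let φ(z) = 1/(1 + e^{−z}) and g(p) = 2·p(1−p)(3p−1)/(2p² + (1−p)²). Fix η > 0 and p_0 ∈ (0,1), and define the sequence Z_0 = φ^{−1}(p_0), Z_{t+1} = Z_t + η·g(φ(Z_t)), with p_t := φ(Z_t). Then: if p_0 > 1/3, the sequence p_t converges to 1, and consequently p_t² + (1−p_t)²/2 → 1; if p_0 < 1/3, the sequence p_t converges to 0, and consequently p_t² + (1−p_t)²/2 → 1/2. -/
import Mathlib


noncomputable section

/-- The sigmoid `φ(z) = 1/(1 + e^{−z})`. -/
def phi (z : ℝ) : ℝ := 1 / (1 + Real.exp (-z))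

/-- The drift `g(p) = 2·p(1−p)(3p−1)/(2p² + (1−p)²)` of the infinite-batch RLVR
dynamics of Proposition 6.3. -/
def gdrift (p : ℝ) : ℝ := 2 * p * (1 - p) * (3 * p - 1) / (2 * p ^ 2 + (1 - p) ^ 2)

open Filter Real

lemma one_add_exp_pos (z : ℝ) : 0 < 1 + Real.exp (-z) := by positivity

lemma phi_pos (z : ℝ) : 0 < phi z := by
  unfold phi; positivity

lemma phi_lt_one (z : ℝ) : phi z < 1 := by
  unfold phi
  rw [div_lt_one (one_add_exp_pos z)]
  linarith [Real.exp_pos (-z)]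

lemma phi_mono : Monotone phi := by
  intro a b hab
  unfold phi
  apply one_div_le_one_div_of_le (one_add_exp_pos b)
  have := Real.exp_le_exp.2 (neg_le_neg hab)
  linarith

lemma phi_cont : Continuous phi := by
  unfold phi
  exact continuous_const.div (by continuity) fun z => (one_add_exp_pos z).ne'

lemma gdenom_pos (p : ℝ) : 0 < 2 * p ^ 2 + (1 - p) ^ 2 := by
  nlinarith [sq_nonneg p, sq_nonneg (1 - p), sq_nonneg (3 * p - 1)]

lemma gdrift_pos {p : ℝ} (h1 : 1 / 3 < p) (h2 : p < 1) : 0 < gdrift p := by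
  unfold gdrift
  apply div_pos _ (gdenom_pos p)
  exact mul_pos (mul_pos (by linarith) (by linarith)) (by linarith)

lemma gdrift_neg {p : ℝ} (h1 : 0 < p) (h2 : p < 1 / 3) : gdrift p < 0 := by
  unfold gdrift
  apply div_neg_of_neg_of_pos _ (gdenom_pos p)
  exact mul_neg_of_pos_of_neg (mul_pos (by linarith) (by linarith)) (by linarith)

lemma gdrift_cont : Continuous gdrift := by
  unfold gdrift
  exact (by fun_prop : Continuous fun p : ℝ => 2 * p * (1 - p) * (3 * p - 1)).div
    (by fun_prop) fun p => (gdenom_pos p).ne'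

lemma phi_eq : phi = fun z => (1 + Real.exp (-z))⁻¹ :=
  funext fun z => by simp [phi, one_div]

lemma phi_tendsto_atTop : Tendsto phi atTop (nhds 1) := by
  have h : Tendsto (fun z : ℝ => Real.exp (-z)) atTop (nhds 0) :=
    Real.tendsto_exp_atBot.comp tendsto_neg_atTop_atBot
  have h2 : Tendsto (fun z : ℝ => 1 + Real.exp (-z)) atTop (nhds 1) := by
    simpa using tendsto_const_nhds.add h
  rw [phi_eq]
  simpa using h2.inv₀ (by norm_num : (1:ℝ) ≠ 0)

lemma phi_tendsto_atBot : Tendsto phi atBot (nhds 0) := by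
  have h : Tendsto (fun z : ℝ => Real.exp (-z)) atBot atTop :=
    Real.tendsto_exp_atTop.comp tendsto_neg_atBot_atTop
  have h2 : Tendsto (fun z : ℝ => 1 + Real.exp (-z)) atBot atTop :=
    tendsto_atTop_add_const_left _ 1 h
  rw [phi_eq]
  exact h2.inv_tendsto_atTop

/-- For the logit recursion `Z_{t+1} = Z_t + η·g(φ(Z_t))` started at
`Z_0 = φ⁻¹(p_0)` with `η > 0` and `p_0 ∈ (0,1)`, writing `p_t = φ(Z_t)`: if
`p_0 > 1/3` then `p_t → 1` and the acceptance probability `p_t² + (1−p_t)²/2 → 1`;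
if `p_0 < 1/3` then `p_t → 0` and `p_t² + (1−p_t)²/2 → 1/2`. -/
theorem stmt4 (η p0 : ℝ) (hη : 0 < η) (hp0 : 0 < p0) (hp1 : p0 < 1)
    (Z : ℕ → ℝ) (hZ0 : phi (Z 0) = p0)
    (hZ : ∀ t, Z (t + 1) = Z t + η * gdrift (phi (Z t))) :
    (1 / 3 < p0 →
      Filter.Tendsto (fun t => phi (Z t)) Filter.atTop (nhds 1) ∧
      Filter.Tendsto (fun t => (phi (Z t)) ^ 2 + (1 - phi (Z t)) ^ 2 / 2)
        Filter.atTop (nhds 1))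
    ∧ (p0 < 1 / 3 →
      Filter.Tendsto (fun t => phi (Z t)) Filter.atTop (nhds 0) ∧
      Filter.Tendsto (fun t => (phi (Z t)) ^ 2 + (1 - phi (Z t)) ^ 2 / 2)
        Filter.atTop (nhds (1 / 2))) := by
  constructor
  · -- `p0 > 1/3`: the sequence increases to `1`.
    intro hp
    have key : ∀ t, 1 / 3 < phi (Z t) := by
      intro t
      induction t with
      | zero => rw [hZ0]; exact hp
      | succ n ih =>
        have hg : 0 < gdrift (phi (Z n)) := gdrift_pos ih (phi_lt_one _)
        have : Z n ≤ Z (n + 1) := by rw [hZ n]; nlinarith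
        exact lt_of_lt_of_le ih (phi_mono this)
    have mono : Monotone Z := by
      apply monotone_nat_of_le_succ
      intro n
      have hg : 0 < gdrift (phi (Z n)) := gdrift_pos (key n) (phi_lt_one _)
      rw [hZ n]; nlinarith
    have hZtop : Tendsto Z atTop atTop := by
      rcases tendsto_of_monotone mono with h | ⟨L, hL⟩
      · exact h
      · exfalso
        have hL' : Tendsto (fun t => Z (t + 1)) atTop (nhds L) :=
          hL.comp (tendsto_add_atTop_nat 1)
        have hc : Tendsto (fun t => Z t + η * gdrift (phi (Z t))) atTop
            (nhds (L + η * gdrift (phi L))) :=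
          hL.add (tendsto_const_nhds.mul
            ((gdrift_cont.tendsto _).comp ((phi_cont.tendsto _).comp hL)))
        have heq : (fun t => Z (t + 1)) = fun t => Z t + η * gdrift (phi (Z t)) :=
          funext fun t => hZ t
        rw [heq] at hL'
        have hgL : gdrift (phi L) = 0 := by
          have := tendsto_nhds_unique hL' hc
          nlinarith
        have hZ0L : Z 0 ≤ L :=
          mono.ge_of_tendsto hL 0
        have h13 : 1 / 3 < phi L := lt_of_lt_of_le (key 0) (phi_mono hZ0L)
        exact (gdrift_pos h13 (phi_lt_one L)).ne' hgL
    have h1 : Tendsto (fun t => phi (Z t)) atTop (nhds 1) :=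
      phi_tendsto_atTop.comp hZtop
    refine ⟨h1, ?_⟩
    have h2 : Tendsto (fun t => (phi (Z t)) ^ 2 + (1 - phi (Z t)) ^ 2 / 2) atTop
        (nhds ((1:ℝ) ^ 2 + (1 - 1) ^ 2 / 2)) :=
      (h1.pow 2).add (((tendsto_const_nhds.sub h1).pow 2).div_const 2)
    norm_num at h2
    exact h2
  · -- `p0 < 1/3`: the sequence decreases to `0`.
    intro hp
    have key : ∀ t, phi (Z t) < 1 / 3 := by
      intro t
      induction t with
      | zero => rw [hZ0]; exact hp
      | succ n ih =>
        have hg : gdrift (phi (Z n)) < 0 := gdrift_neg (phi_pos _) ih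
        have : Z (n + 1) ≤ Z n := by rw [hZ n]; nlinarith
        exact lt_of_le_of_lt (phi_mono this) ih
    have anti : Antitone Z := by
      apply antitone_nat_of_succ_le
      intro n
      have hg : gdrift (phi (Z n)) < 0 := gdrift_neg (phi_pos _) (key n)
      rw [hZ n]; nlinarith
    have hZbot : Tendsto Z atTop atBot := by
      rcases tendsto_of_antitone anti with h | ⟨L, hL⟩
      · exact h
      · exfalso
        have hL' : Tendsto (fun t => Z (t + 1)) atTop (nhds L) :=
          hL.comp (tendsto_add_atTop_nat 1)
        have hc : Tendsto (fun t => Z t + η * gdrift (phi (Z t))) atTop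
            (nhds (L + η * gdrift (phi L))) :=
          hL.add (tendsto_const_nhds.mul
            ((gdrift_cont.tendsto _).comp ((phi_cont.tendsto _).comp hL)))
        have heq : (fun t => Z (t + 1)) = fun t => Z t + η * gdrift (phi (Z t)) :=
          funext fun t => hZ t
        rw [heq] at hL'
        have hgL : gdrift (phi L) = 0 := by
          have := tendsto_nhds_unique hL' hc
          nlinarith
        have hZ0L : L ≤ Z 0 :=
          anti.le_of_tendsto hL 0
        have h13 : phi L < 1 / 3 := lt_of_le_of_lt (phi_mono hZ0L) (key 0)
        exact (gdrift_neg (phi_pos L) h13).ne hgL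
    have h1 : Tendsto (fun t => phi (Z t)) atTop (nhds 0) :=
      phi_tendsto_atBot.comp hZbot
    refine ⟨h1, ?_⟩
    have h2 : Tendsto (fun t => (phi (Z t)) ^ 2 + (1 - phi (Z t)) ^ 2 / 2) atTop
        (nhds ((0:ℝ) ^ 2 + (1 - 0) ^ 2 / 2)) :=
      (h1.pow 2).add (((tendsto_const_nhds.sub h1).pow 2).div_const 2)
    norm_num at h2
    exact h2
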